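/- (Duplication formula in genus 2.) For all a, b ∈ {0,1}² and every Ω ∈ H_2, one has θ_{a,b}(Ω)² = (1/4)·∑_{(b₁,b₂)} (−1)^{ᵗa·b₁}·θ[0; b₁/2](0, Ω/2)·θ[0; b₂/2](0, Ω/2), where the sum runs over the pairs (b₁,b₂) ∈ {0,1}² × {0,1}² with b₁ + b₂ ≡ b (mod 2). -/

import Mathlib

open Matrix

/-- The Siegel upper half-space: symmetric complex `g × g` matrices with positive
definite imaginary part. -/
def SiegelUpperHalf (g : ℕ) : Set (Matrix (Fin g) (Fin g) ℂ) :=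
  {Ω | Ω.IsSymm ∧ (Matrix.of fun i j => (Ω i j).im).PosDef}

/-- The general term of the theta series with characteristic `(a, b)`. -/
noncomputable def thetaTerm (g : ℕ) (a b : Fin g → ℚ) (z : Fin g → ℂ)
    (Ω : Matrix (Fin g) (Fin g) ℂ) (n : Fin g → ℤ) : ℂ :=
  Complex.exp (Real.pi * Complex.I *
      ((fun i => (n i : ℂ) + (a i : ℂ)) ⬝ᵥ Ω.mulVec (fun i => (n i : ℂ) + (a i : ℂ)))
    + 2 * Real.pi * Complex.I *
      ((fun i => (n i : ℂ) + (a i : ℂ)) ⬝ᵥ (fun i => z i + (b i : ℂ))))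

/-- The theta function with characteristic `(a, b)`. -/
noncomputable def theta (g : ℕ) (a b : Fin g → ℚ) (z : Fin g → ℂ)
    (Ω : Matrix (Fin g) (Fin g) ℂ) : ℂ :=
  ∑' n : Fin g → ℤ, thetaTerm g a b z Ω n

/-!
Expand `θ_{a,b}(Ω)²` as a double series over `(m, n) ∈ ℤ^g × ℤ^g` and substitute
`p = m - n`, `q = m + n + a`. Since `(u + v)ᵀΩ(u + v) + (u - v)ᵀΩ(u - v) = 2(uᵀΩu + vᵀΩv)`,
the exponent becomes `πi/2 (pᵀΩp + qᵀΩq) + πi qᵀb`, and `(p, q)` runs exactly over the pairs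
with `p + q + a` even. Expanding each product `θ[0;b₁/2](Ω/2) θ[0;b₂/2](Ω/2)` gives the same
Gaussian terms weighted by `(-1)^{(a + p)ᵀb₁ + qᵀb₂}`; summed over `b₁ + b₂ ≡ b`, this character
sum factors over the coordinates and equals `2^g (-1)^{qᵀb}` when `p + q + a` is even and `0`
otherwise. Since `Im Ω` is positive definite, all the series converge absolutely.
-/

open Complex Finset
open scoped Real

lemma cexp_pi_mul_I_intCast_congr {k l : ℤ} (h : k ≡ l [ZMOD 2]) :
    exp (π * I * k) = exp (π * I * l) := by
  obtain ⟨m, hm⟩ := Int.modEq_iff_dvd.mp h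
  have hl : (l : ℂ) = k + 2 * m := by exact_mod_cast sub_eq_iff_eq_add'.mp hm
  rw [exp_eq_exp_iff_exists_int]
  exact ⟨-m, by rw [hl]; push_cast; ring⟩

lemma sum_zmod_two_cexp (c d : ℤ) (b : ℕ) :
    ∑ y : ZMod 2, exp (π * I * ((c * y.val + d * ((b : ZMod 2) - y).val : ℤ) : ℂ)) =
      if Even (c + d) then 2 * exp (π * I * ((d * b : ℤ) : ℂ)) else 0 := by
  have two_eq_zero : (2 : ZMod 2) = 0 := rfl
  have h0 : c * (0 : ZMod 2).val + d * ((b : ZMod 2) - 0).val ≡ d * b [ZMOD 2] := by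
    refine (ZMod.intCast_eq_intCast_iff _ _ 2).mp ?_
    push_cast [ZMod.natCast_val, ZMod.cast_id]; ring
  have h1 : c * (1 : ZMod 2).val + d * ((b : ZMod 2) - 1).val ≡ d * b + (c + d) [ZMOD 2] := by
    refine (ZMod.intCast_eq_intCast_iff _ _ 2).mp ?_
    push_cast [ZMod.natCast_val, ZMod.cast_id]
    linear_combination (-d : ZMod 2) * two_eq_zero
  rw [show (univ : Finset (ZMod 2)) = {0, 1} from rfl, sum_pair zero_ne_one,
    cexp_pi_mul_I_intCast_congr h0, cexp_pi_mul_I_intCast_congr h1]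
  split_ifs with h
  · have : d * b + (c + d) ≡ d * b + 0 [ZMOD 2] :=
      (Int.modEq_zero_iff_dvd.mpr (even_iff_two_dvd.mp h)).add_left _
    rw [cexp_pi_mul_I_intCast_congr this, add_zero]; ring
  · have : d * b + (c + d) ≡ d * b + 1 [ZMOD 2] :=
      (show c + d ≡ 1 [ZMOD 2] from Int.odd_iff.mp (Int.not_even_iff_odd.mp h)).add_left _
    rw [cexp_pi_mul_I_intCast_congr this]
    push_cast
    rw [mul_add, exp_add, mul_one, exp_pi_mul_I]; ring

lemma sum_filter_add_eq_cexp {ι : Type*} [Fintype ι] [DecidableEq ι] (c d : ι → ℤ) (b : ι → ℕ) :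
    ∑ x ∈ univ.filter (fun x : (ι → ZMod 2) × (ι → ZMod 2) => x.1 + x.2 = fun i => (b i : ZMod 2)),
      exp (π * I * ((∑ i, (c i * (x.1 i).val + d i * (x.2 i).val) : ℤ) : ℂ)) =
      if ∀ i, Even (c i + d i) then
        2 ^ Fintype.card ι * exp (π * I * ((∑ i, d i * b i : ℤ) : ℂ)) else 0 := by
  rw [sum_filter, Fintype.sum_prod_type]
  simp_rw [← eq_sub_iff_add_eq', sum_ite_eq', mem_univ, if_true, Int.cast_sum, mul_sum, exp_sum,
    Pi.sub_apply]
  rw [← Fintype.prod_sum fun i (y : ZMod 2) =>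
    exp (π * I * ((c i * y.val + d i * ((b i : ZMod 2) - y).val : ℤ) : ℂ))]
  simp_rw [sum_zmod_two_cexp]
  split_ifs with h
  · rw [prod_congr rfl fun i _ => if_pos (h i), prod_mul_distrib, prod_const, card_univ]
  · obtain ⟨i, hi⟩ := not_forall.mp h
    exact prod_eq_zero (mem_univ i) (if_neg hi)

lemma injective_sub_add_add {ι : Type*} (a : ι → ℤ) :
    Function.Injective fun mn : (ι → ℤ) × (ι → ℤ) => (mn.1 - mn.2, mn.1 + mn.2 + a) := by
  rintro ⟨m, n⟩ ⟨m', n'⟩ h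
  simp only [Prod.mk.injEq, funext_iff, Pi.sub_apply, Pi.add_apply] at h
  obtain ⟨h₁, h₂⟩ := h
  simp only [Prod.mk.injEq, funext_iff]
  exact ⟨fun i => by linarith [h₁ i, h₂ i], fun i => by linarith [h₁ i, h₂ i]⟩

lemma range_sub_add_add {ι : Type*} (a : ι → ℤ) :
    Set.range (fun mn : (ι → ℤ) × (ι → ℤ) => (mn.1 - mn.2, mn.1 + mn.2 + a)) =
      {pq | ∀ i, Even (pq.1 i + a i + pq.2 i)} := by
  ext ⟨p, q⟩
  constructor
  · rintro ⟨⟨m, n⟩, h⟩ i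
    obtain ⟨rfl, rfl⟩ := Prod.mk.inj h
    exact ⟨m i + a i, by simp only [Pi.sub_apply, Pi.add_apply]; ring⟩
  · intro h
    choose k hk using h
    refine ⟨(k - a, k - a - p), ?_⟩
    simp only [Prod.mk.injEq, funext_iff, Pi.sub_apply, Pi.add_apply]
    exact ⟨fun i => by ring, fun i => by linarith [hk i]⟩

lemma summable_prod_apply_of_nonneg {ι κ : Type*} [Fintype ι] {f : ι → κ → ℝ}
    (hf₀ : ∀ i k, 0 ≤ f i k) (hf : ∀ i, Summable (f i)) :
    Summable fun x : ι → κ => ∏ i, f i (x i) := by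
  classical
  refine summable_of_sum_le (c := ∏ i, ∑' k, f i k) (fun x => prod_nonneg fun i _ => hf₀ i _)
    fun s => ?_
  calc ∑ x ∈ s, ∏ i, f i (x i)
      ≤ ∑ x ∈ Fintype.piFinset fun i => s.image (· i), ∏ i, f i (x i) :=
        sum_le_sum_of_subset_of_nonneg
          (fun x hx => Fintype.mem_piFinset.mpr fun i => mem_image_of_mem _ hx)
          fun x _ _ => prod_nonneg fun i _ => hf₀ i _
    _ = ∏ i, ∑ k ∈ s.image (· i), f i k := (prod_univ_sum _ _).symm
    _ ≤ ∏ i, ∑' k, f i k :=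
        prod_le_prod (fun i _ => sum_nonneg fun k _ => hf₀ i k)
          fun i _ => (hf i).sum_le_tsum _ fun k _ => hf₀ i k

lemma Matrix.PosDef.exists_pos_mul_dotProduct_self_le {ι : Type*} [Fintype ι]
    {Y : Matrix ι ι ℝ} (hY : Y.PosDef) :
    ∃ c > 0, ∀ v : ι → ℝ, c * (v ⬝ᵥ v) ≤ v ⬝ᵥ Y *ᵥ v := by
  rcases isEmpty_or_nonempty ι with hι | hι
  · exact ⟨1, one_pos, fun v => by simp [dotProduct]⟩
  obtain ⟨v₀, hv₀, hmin⟩ := (isCompact_sphere (0 : ι → ℝ) 1).exists_isMinOn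
    (NormedSpace.sphere_nonempty.mpr zero_le_one)
    (by fun_prop : Continuous fun v : ι → ℝ => v ⬝ᵥ Y *ᵥ v).continuousOn
  have hpos : 0 < v₀ ⬝ᵥ Y *ᵥ v₀ := by
    simpa using hY.dotProduct_mulVec_pos (ne_zero_of_mem_sphere one_ne_zero ⟨v₀, hv₀⟩)
  refine ⟨(v₀ ⬝ᵥ Y *ᵥ v₀) / Fintype.card ι, by positivity, fun v => ?_⟩
  rcases eq_or_ne v 0 with rfl | hv
  · simp
  have hv' : 0 < ‖v‖ := norm_pos_iff.mpr hv
  have hscaled : v₀ ⬝ᵥ Y *ᵥ v₀ ≤ ‖v‖⁻¹ ^ 2 * (v ⬝ᵥ Y *ᵥ v) := by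
    have := hmin (show ‖v‖⁻¹ • v ∈ Metric.sphere (0 : ι → ℝ) 1 by
      simp [norm_smul, hv'.ne'])
    simpa [mulVec_smul, dotProduct_smul, smul_dotProduct, sq, mul_assoc] using this
  have hsum : v ⬝ᵥ v ≤ Fintype.card ι * ‖v‖ ^ 2 := by
    calc v ⬝ᵥ v ≤ ∑ _i : ι, ‖v‖ ^ 2 :=
          sum_le_sum fun i _ => by
            rw [← abs_mul_abs_self, sq]
            exact mul_self_le_mul_self (abs_nonneg _) (norm_le_pi_norm v i)
      _ = Fintype.card ι * ‖v‖ ^ 2 := by simp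
  rw [div_mul_eq_mul_div, div_le_iff₀ (by positivity)]
  rw [inv_pow, ← div_eq_inv_mul, le_div_iff₀ (by positivity)] at hscaled
  nlinarith

lemma dotProduct_mulVec_add_add_sub {ι R : Type*} [Fintype ι] [CommRing R] (A : Matrix ι ι R)
    (u v : ι → R) :
    (u + v) ⬝ᵥ A *ᵥ (u + v) + (u - v) ⬝ᵥ A *ᵥ (u - v) = 2 * (u ⬝ᵥ A *ᵥ u + v ⬝ᵥ A *ᵥ v) := by
  simp only [mulVec_add, mulVec_sub, add_dotProduct, dotProduct_add, sub_dotProduct,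
    dotProduct_sub]
  ring

variable {g : ℕ}

noncomputable def duplicationTerm (Ω : Matrix (Fin g) (Fin g) ℂ) (b : Fin g → ℕ)
    (p q : Fin g → ℤ) : ℂ :=
  exp (π * I / 2 * ((fun i => (p i : ℂ)) ⬝ᵥ Ω *ᵥ (fun i => (p i : ℂ)) +
      (fun i => (q i : ℂ)) ⬝ᵥ Ω *ᵥ (fun i => (q i : ℂ))) +
    π * I * ((∑ i, q i * b i : ℤ) : ℂ))

lemma thetaTerm_half_mul_thetaTerm_half (a b : Fin g → ℕ) (Ω : Matrix (Fin g) (Fin g) ℂ)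
    (m n : Fin g → ℤ) :
    thetaTerm g (fun i => (a i : ℚ) / 2) (fun i => (b i : ℚ) / 2) 0 Ω m *
        thetaTerm g (fun i => (a i : ℚ) / 2) (fun i => (b i : ℚ) / 2) 0 Ω n =
      duplicationTerm Ω b (m - n) (m + n + fun i => (a i : ℤ)) := by
  rw [thetaTerm, thetaTerm, ← exp_add, duplicationTerm]
  simp only [Pi.zero_apply, zero_add]
  set u : Fin g → ℂ := fun i => (m i : ℂ) + ((a i / 2 : ℚ) : ℂ)
  set v : Fin g → ℂ := fun i => (n i : ℂ) + ((a i / 2 : ℚ) : ℂ)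
  set c : Fin g → ℂ := fun i => ((b i / 2 : ℚ) : ℂ)
  have hp : (fun i => (((m - n) i : ℤ) : ℂ)) = u - v := by
    funext i; simp only [u, v, Pi.sub_apply]; push_cast; ring
  have hq : (fun i => (((m + n + fun i => (a i : ℤ)) i : ℤ) : ℂ)) = u + v := by
    funext i; simp only [u, v, Pi.add_apply]; push_cast; ring
  have hlin : ((∑ i, (m + n + fun i => (a i : ℤ)) i * b i : ℤ) : ℂ) =
      2 * (u ⬝ᵥ c) + 2 * (v ⬝ᵥ c) := by
    simp only [u, v, c, dotProduct, mul_sum, ← sum_add_distrib, Int.cast_sum]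
    refine sum_congr rfl fun i _ => ?_
    simp only [Pi.add_apply]; push_cast; ring
  rw [hp, hq, hlin, add_comm ((u - v) ⬝ᵥ _), dotProduct_mulVec_add_add_sub]
  congr 1
  ring

lemma thetaTerm_zero_half_smul (β : Fin g → ZMod 2) (Ω : Matrix (Fin g) (Fin g) ℂ)
    (p : Fin g → ℤ) :
    thetaTerm g 0 (fun i => ((β i).val : ℚ) / 2) 0 ((2 : ℂ)⁻¹ • Ω) p =
      exp (π * I / 2 * ((fun i => (p i : ℂ)) ⬝ᵥ Ω *ᵥ (fun i => (p i : ℂ))) +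
        π * I * ((∑ i, p i * (β i).val : ℤ) : ℂ)) := by
  simp only [thetaTerm, Pi.zero_apply, Rat.cast_zero, add_zero, zero_add, smul_mulVec,
    dotProduct_smul, smul_eq_mul]
  have hlin : ((∑ i, p i * (β i).val : ℤ) : ℂ) =
      2 * ((fun i => (p i : ℂ)) ⬝ᵥ fun i => (((β i).val / 2 : ℚ) : ℂ)) := by
    simp only [dotProduct, mul_sum, Int.cast_sum]
    refine sum_congr rfl fun i _ => ?_
    push_cast; ring
  rw [hlin]
  congr 1
  ring

lemma sum_neg_one_pow_mul_thetaTerm_mul_thetaTerm (a b : Fin g → ℕ) (Ω : Matrix (Fin g) (Fin g) ℂ)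
    (p q : Fin g → ℤ) :
    ∑ x ∈ univ.filter (fun x : (Fin g → ZMod 2) × (Fin g → ZMod 2) =>
        x.1 + x.2 = fun i => (b i : ZMod 2)),
      (-1 : ℂ) ^ (∑ i, a i * (x.1 i).val) *
        thetaTerm g 0 (fun i => ((x.1 i).val : ℚ) / 2) 0 ((2 : ℂ)⁻¹ • Ω) p *
        thetaTerm g 0 (fun i => ((x.2 i).val : ℚ) / 2) 0 ((2 : ℂ)⁻¹ • Ω) q =
      if ∀ i, Even (p i + a i + q i) then 2 ^ g * duplicationTerm Ω b p q else 0 := by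
  have hterm : ∀ x : (Fin g → ZMod 2) × (Fin g → ZMod 2),
      (-1 : ℂ) ^ (∑ i, a i * (x.1 i).val) *
        thetaTerm g 0 (fun i => ((x.1 i).val : ℚ) / 2) 0 ((2 : ℂ)⁻¹ • Ω) p *
        thetaTerm g 0 (fun i => ((x.2 i).val : ℚ) / 2) 0 ((2 : ℂ)⁻¹ • Ω) q =
      exp (π * I / 2 * ((fun i => (p i : ℂ)) ⬝ᵥ Ω *ᵥ (fun i => (p i : ℂ)) +
          (fun i => (q i : ℂ)) ⬝ᵥ Ω *ᵥ (fun i => (q i : ℂ)))) *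
        exp (π * I * ((∑ i, ((p i + a i) * (x.1 i).val + q i * (x.2 i).val) : ℤ) : ℂ)) := by
    intro x
    rw [thetaTerm_zero_half_smul, thetaTerm_zero_half_smul, ← exp_pi_mul_I, ← exp_nat_mul,
      ← exp_add, ← exp_add, ← exp_add]
    congr 1
    push_cast [add_mul, sum_add_distrib]
    ring
  rw [sum_congr rfl fun x _ => hterm x, ← mul_sum, sum_filter_add_eq_cexp, Fintype.card_fin]
  split_ifs
  · rw [duplicationTerm, exp_add]; ring
  · rw [mul_zero]

lemma norm_thetaTerm_zero (a b : Fin g → ℚ) (Ω : Matrix (Fin g) (Fin g) ℂ) (n : Fin g → ℤ) :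
    ‖thetaTerm g a b 0 Ω n‖ = Real.exp (-π * ((fun i => (n i : ℝ) + a i) ⬝ᵥ
      (Matrix.of fun i j => (Ω i j).im) *ᵥ (fun i => (n i : ℝ) + a i))) := by
  rw [thetaTerm, norm_exp]
  congr 1
  simp [dotProduct, mulVec, re_sum, mul_sum]

lemma summable_norm_thetaTerm (a b : Fin g → ℚ) {Ω : Matrix (Fin g) (Fin g) ℂ}
    (hΩ : (Matrix.of fun i j => (Ω i j).im).PosDef) :
    Summable fun n => ‖thetaTerm g a b 0 Ω n‖ := by
  obtain ⟨c, hc, hle⟩ := hΩ.exists_pos_mul_dotProduct_self_le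
  have hgauss : ∀ t : ℝ, Summable fun k : ℤ => Real.exp (-π * (k + t) ^ 2 * c) := fun t =>
    (HurwitzKernelBounds.summable_f_int 0 t hc).congr fun k => by
      simp [HurwitzKernelBounds.f_int]
  refine (summable_prod_apply_of_nonneg (fun _ _ => (Real.exp_pos _).le)
    fun i => hgauss (a i)).of_nonneg_of_le (fun _ => norm_nonneg _) fun n => ?_
  rw [norm_thetaTerm_zero, ← Real.exp_sum, Real.exp_le_exp]
  have := hle fun i => (n i : ℝ) + a i
  have hsum : ∑ i, -π * ((n i : ℝ) + a i) ^ 2 * c =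
      -π * (c * ((fun i => (n i : ℝ) + a i) ⬝ᵥ fun i => (n i : ℝ) + a i)) := by
    simp only [dotProduct, mul_sum]
    exact sum_congr rfl fun i _ => by ring
  rw [hsum]
  exact mul_le_mul_of_nonpos_left this (by linarith [Real.pi_pos])

lemma posDef_im_inv_two_smul {Ω : Matrix (Fin g) (Fin g) ℂ}
    (hΩ : (Matrix.of fun i j => (Ω i j).im).PosDef) :
    (Matrix.of fun i j => (((2 : ℂ)⁻¹ • Ω) i j).im).PosDef := by
  convert hΩ.smul (inv_pos.mpr two_pos : (0 : ℝ) < 2⁻¹) using 1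
  ext i j
  simp

lemma theta_half_sq_eq_tsum (a b : Fin g → ℕ) {Ω : Matrix (Fin g) (Fin g) ℂ}
    (hΩ : (Matrix.of fun i j => (Ω i j).im).PosDef) :
    theta g (fun i => (a i : ℚ) / 2) (fun i => (b i : ℚ) / 2) 0 Ω ^ 2 =
      ∑' pq, {pq : (Fin g → ℤ) × (Fin g → ℤ) | ∀ i, Even (pq.1 i + a i + pq.2 i)}.indicator
        (fun pq => duplicationTerm Ω b pq.1 pq.2) pq := by
  have h := summable_norm_thetaTerm (fun i => (a i : ℚ) / 2) (fun i => (b i : ℚ) / 2) hΩ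
  rw [sq, theta, tsum_mul_tsum_of_summable_norm h h, ← range_sub_add_add, ← _root_.tsum_subtype,
    tsum_range (fun pq => duplicationTerm Ω b pq.1 pq.2) (injective_sub_add_add _)]
  exact tsum_congr fun mn => thetaTerm_half_mul_thetaTerm_half a b Ω mn.1 mn.2

lemma sum_neg_one_pow_mul_theta_mul_theta (a b : Fin g → ℕ) {Ω : Matrix (Fin g) (Fin g) ℂ}
    (hΩ : (Matrix.of fun i j => (Ω i j).im).PosDef) :
    ∑ x ∈ univ.filter (fun x : (Fin g → ZMod 2) × (Fin g → ZMod 2) =>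
        x.1 + x.2 = fun i => (b i : ZMod 2)),
      (-1 : ℂ) ^ (∑ i, a i * (x.1 i).val) *
        theta g 0 (fun i => ((x.1 i).val : ℚ) / 2) 0 ((2 : ℂ)⁻¹ • Ω) *
        theta g 0 (fun i => ((x.2 i).val : ℚ) / 2) 0 ((2 : ℂ)⁻¹ • Ω) =
      ∑' pq : (Fin g → ℤ) × (Fin g → ℤ), if ∀ i, Even (pq.1 i + a i + pq.2 i) then
        2 ^ g * duplicationTerm Ω b pq.1 pq.2 else 0 := by
  have h (β : Fin g → ZMod 2) := summable_norm_thetaTerm 0 (fun i => ((β i).val : ℚ) / 2)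
    (posDef_im_inv_two_smul hΩ)
  simp_rw [theta, mul_assoc, tsum_mul_tsum_of_summable_norm (h _) (h _), ← tsum_mul_left]
  rw [← Summable.tsum_finsetSum fun x _ => (summable_mul_of_summable_norm (h _) (h _)).mul_left _]
  simp_rw [← mul_assoc]
  exact tsum_congr fun pq => sum_neg_one_pow_mul_thetaTerm_mul_thetaTerm a b Ω pq.1 pq.2

theorem theta_half_sq_eq_sum (a b : Fin g → ℕ) {Ω : Matrix (Fin g) (Fin g) ℂ}
    (hΩ : (Matrix.of fun i j => (Ω i j).im).PosDef) :
    theta g (fun i => (a i : ℚ) / 2) (fun i => (b i : ℚ) / 2) 0 Ω ^ 2 =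
      (1 / 2 ^ g : ℂ) * ∑ x ∈ univ.filter (fun x : (Fin g → ZMod 2) × (Fin g → ZMod 2) =>
          x.1 + x.2 = fun i => (b i : ZMod 2)),
        (-1 : ℂ) ^ (∑ i, a i * (x.1 i).val) *
          theta g 0 (fun i => ((x.1 i).val : ℚ) / 2) 0 ((2 : ℂ)⁻¹ • Ω) *
          theta g 0 (fun i => ((x.2 i).val : ℚ) / 2) 0 ((2 : ℂ)⁻¹ • Ω) := by
  rw [theta_half_sq_eq_tsum a b hΩ, sum_neg_one_pow_mul_theta_mul_theta a b hΩ, ← tsum_mul_left]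
  refine tsum_congr fun pq => ?_
  simp only [Set.indicator_apply, Set.mem_ofPred_eq]
  split_ifs
  · field_simp
  · rw [mul_zero]

theorem duplication_formula_general (a b : Fin 2 → ℕ)
    (Ω : Matrix (Fin 2) (Fin 2) ℂ) (hΩ : Ω ∈ SiegelUpperHalf 2) :
    theta 2 (fun i => (a i : ℚ) / 2) (fun i => (b i : ℚ) / 2) 0 Ω ^ 2 =
      (1 / 4 : ℂ) * ∑ q ∈ Finset.univ.filter
          (fun q : (Fin 2 → ZMod 2) × (Fin 2 → ZMod 2) =>
            q.1 + q.2 = fun i => ((b i : ZMod 2))),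
        ((-1 : ℂ) ^ (a 0 * (q.1 0).val + a 1 * (q.1 1).val) *
          theta 2 0 (fun i => ((q.1 i).val : ℚ) / 2) 0 ((2 : ℂ)⁻¹ • Ω) *
          theta 2 0 (fun i => ((q.2 i).val : ℚ) / 2) 0 ((2 : ℂ)⁻¹ • Ω)) := by
  rw [theta_half_sq_eq_sum a b hΩ.2]
  norm_num [Fin.sum_univ_two]

/-- The duplication formula in genus 2: `θ_{a,b}(Ω)²` is a quarter of the sum of
`(-1)^{ᵗa·b₁} θ[0;b₁/2](0,Ω/2) θ[0;b₂/2](0,Ω/2)` over the pairs `(b₁,b₂)` in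
`{0,1}² × {0,1}²` with `b₁ + b₂ ≡ b (mod 2)`. -/
theorem duplication_formula (a b : Fin 2 → ℕ)
    (ha : ∀ i, a i = 0 ∨ a i = 1) (hb : ∀ i, b i = 0 ∨ b i = 1)
    (Ω : Matrix (Fin 2) (Fin 2) ℂ) (hΩ : Ω ∈ SiegelUpperHalf 2) :
    theta 2 (fun i => (a i : ℚ) / 2) (fun i => (b i : ℚ) / 2) 0 Ω ^ 2 =
      (1 / 4 : ℂ) * ∑ q ∈ Finset.univ.filter
          (fun q : (Fin 2 → ZMod 2) × (Fin 2 → ZMod 2) =>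
            q.1 + q.2 = fun i => ((b i : ZMod 2))),
        ((-1 : ℂ) ^ (a 0 * (q.1 0).val + a 1 * (q.1 1).val) *
          theta 2 0 (fun i => ((q.1 i).val : ℚ) / 2) 0 ((2 : ℂ)⁻¹ • Ω) *
          theta 2 0 (fun i => ((q.2 i).val : ℚ) / 2) 0 ((2 : ℂ)⁻¹ • Ω)) :=
  duplication_formula_general a b Ω hΩ
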